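/- For composable Grothendieck fibrations P : E → B₂ and Q : B₂ → B₁ and any object I of B₁, the restriction of P to the fibers gives a functor P_I : E_I → (B₂)_I from the fiber of Q∘P over I to the fiber of Q over I, and P_I is itself a Grothendieck fibration. -/

import Mathlib

/-!
A morphism of `E` lying over a morphism of the fiber `(B₂)_I` lies over `𝟙 I` for `P ⋙ Q`. Hence a
strongly `P`-cartesian lift of a morphism of `(B₂)_I` with target in `E_I` is itself a morphism of
`E_I`, and the factorizations given by its universal property stay in `E_I` as well; so it is
strongly cartesian for `P_I`.
-/

open CategoryTheory Functor

namespace CategoryTheory.IsHomLift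

variable {C D D' 𝒮 : Type*} [Category C] [Category D] [Category D'] [Category 𝒮]

lemma comp_iff_of_faithful (F : C ⥤ D) (G : D ⥤ D') [G.Faithful] (hG : G.obj.Injective)
    {R S : D} {a b : C} (g : R ⟶ S) (φ : a ⟶ b) :
    (F ⋙ G).IsHomLift (G.map g) φ ↔ F.IsHomLift g φ := by
  refine ⟨fun _ => ?_, fun _ => ?_⟩
  · obtain rfl := hG (domain_eq (F ⋙ G) (G.map g) φ)
    obtain rfl := hG (codomain_eq (F ⋙ G) (G.map g) φ)
    obtain rfl : g = F.map φ := G.map_injective (eq_of_isHomLift (F ⋙ G) (G.map g) φ)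
    infer_instance
  · subst_hom_lift F g φ
    exact inferInstanceAs ((F ⋙ G).IsHomLift ((F ⋙ G).map φ) φ)

lemma comp_left_iff (G : C ⥤ D) (P : D ⥤ 𝒮) {R S : 𝒮} {a b : C} (f : R ⟶ S) (φ : a ⟶ b) :
    (G ⋙ P).IsHomLift f φ ↔ P.IsHomLift f (G.map φ) :=
  ⟨fun _ => of_fac' P f (G.map φ) (domain_eq (G ⋙ P) f φ) (codomain_eq (G ⋙ P) f φ)
      (fac' (G ⋙ P) f φ),
    fun _ => of_fac' (G ⋙ P) f φ (domain_eq P f (G.map φ)) (codomain_eq P f (G.map φ))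
      (fac' P f (G.map φ))⟩

lemma comp_of_isHomLift (P : C ⥤ D) (Q : D ⥤ 𝒮) {I J : 𝒮} {X Y : D} {a b : C}
    (f : I ⟶ J) (u : X ⟶ Y) (φ : a ⟶ b) [P.IsHomLift u φ] [Q.IsHomLift f u] :
    (P ⋙ Q).IsHomLift f φ := by
  subst_hom_lift P u φ
  rwa [comp_left_iff]

end CategoryTheory.IsHomLift

namespace CategoryTheory.Functor

open IsHomLift

variable {E B₂ B₁ : Type*} [Category E] [Category B₂] [Category B₁]

def fiberRestriction (P : E ⥤ B₂) (Q : B₂ ⥤ B₁) (I : B₁) : (P ⋙ Q).Fiber I ⥤ Q.Fiber I :=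
  Fiber.inducedFunctor (p := Q) (F := Fiber.fiberInclusion ⋙ P)
    (Fiber.fiberInclusion_comp_eq_const (p := P ⋙ Q))

variable {P : E ⥤ B₂} {Q : B₂ ⥤ B₁} {I : B₁}

lemma fiberRestriction_comp_fiberInclusion :
    fiberRestriction P Q I ⋙ Fiber.fiberInclusion = Fiber.fiberInclusion ⋙ P :=
  rfl

lemma isHomLift_fiberRestriction_iff {a b : (P ⋙ Q).Fiber I} {R S : Q.Fiber I} (g : R ⟶ S)
    (φ : a ⟶ b) : (fiberRestriction P Q I).IsHomLift g φ ↔ P.IsHomLift g.1 φ.1 :=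
  calc (fiberRestriction P Q I).IsHomLift g φ
      ↔ (Fiber.fiberInclusion ⋙ P).IsHomLift g.1 φ :=
        (comp_iff_of_faithful _ _ Fiber.fiberInclusion_obj_inj g φ).symm
    _ ↔ P.IsHomLift g.1 φ.1 := comp_left_iff _ _ _ _

lemma isStronglyCartesian_fiberRestriction {a b : (P ⋙ Q).Fiber I} {R S : Q.Fiber I}
    (f : R ⟶ S) (φ : a ⟶ b) (hφ : P.IsStronglyCartesian f.1 φ.1) :
    (fiberRestriction P Q I).IsStronglyCartesian f φ where
  toIsHomLift := (isHomLift_fiberRestriction_iff f φ).2 inferInstance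
  universal_property' {c} g ψ hψ := by
    have : P.IsHomLift (g.1 ≫ f.1) ψ.1 := (isHomLift_fiberRestriction_iff (g ≫ f) ψ).1 hψ
    obtain ⟨χ, ⟨hχ, hχφ⟩, hχ_uniq⟩ :=
      IsStronglyCartesian.universal_property P f.1 φ.1 g.1 _ rfl ψ.1
    have : Q.IsHomLift (𝟙 I) g.1 := g.2
    let χ' : c ⟶ a := ⟨χ, comp_of_isHomLift P Q (𝟙 I) g.1 χ⟩
    refine ⟨χ', ⟨(isHomLift_fiberRestriction_iff g χ').2 hχ, Fiber.hom_ext hχφ⟩, ?_⟩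
    rintro ξ ⟨hξ, hξφ⟩
    exact Fiber.hom_ext <| hχ_uniq ξ.1
      ⟨(isHomLift_fiberRestriction_iff g ξ).1 hξ, congrArg Fiber.fiberInclusion.map hξφ⟩

lemma exists_isStronglyCartesian_fiberRestriction [P.IsFibered] (a : (P ⋙ Q).Fiber I)
    (R : Q.Fiber I) (f : R ⟶ (fiberRestriction P Q I).obj a) :
    ∃ (b : (P ⋙ Q).Fiber I) (φ : b ⟶ a), (fiberRestriction P Q I).IsStronglyCartesian f φ := by
  obtain ⟨b, φ, _⟩ : ∃ (b : E) (φ : b ⟶ a.1), P.IsCartesian f.1 φ :=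
    IsPreFibered.exists_isCartesian' f.1
  have hb : (P ⋙ Q).obj b = I := by
    rw [comp_obj, domain_eq P f.1 φ, R.2]
  have : Q.IsHomLift (𝟙 I) f.1 := f.2
  exact ⟨⟨b, hb⟩, ⟨φ, comp_of_isHomLift P Q (𝟙 I) f.1 φ⟩, isStronglyCartesian_fiberRestriction f _
    (IsFibered.isStronglyCartesian_of_isCartesian P f.1 φ)⟩

instance isFibered_fiberRestriction [P.IsFibered] : (fiberRestriction P Q I).IsFibered :=
  IsFibered.of_exists_isStronglyCartesian exists_isStronglyCartesian_fiberRestriction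

end CategoryTheory.Functor

theorem stmt10_general {E B₂ B₁ : Type*} [Category E] [Category B₂] [Category B₁]
    (P : E ⥤ B₂) (Q : B₂ ⥤ B₁) [P.IsFibered] (I : B₁) :
    ∃ PI : (P ⋙ Q).Fiber I ⥤ Q.Fiber I,
      (PI ⋙ Functor.Fiber.fiberInclusion = Functor.Fiber.fiberInclusion ⋙ P) ∧
      PI.IsFibered :=
  ⟨fiberRestriction P Q I, fiberRestriction_comp_fiberInclusion, inferInstance⟩

theorem stmt10 {E B₂ B₁ : Type*} [Category E] [Category B₂] [Category B₁]
    (P : E ⥤ B₂) (Q : B₂ ⥤ B₁) [P.IsFibered] [Q.IsFibered] (I : B₁) :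
    ∃ PI : (P ⋙ Q).Fiber I ⥤ Q.Fiber I,
      (PI ⋙ Functor.Fiber.fiberInclusion = Functor.Fiber.fiberInclusion ⋙ P) ∧
      PI.IsFibered :=
  stmt10_general P Q I
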